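/- Let k ≥ 2 and h ≥ 1 be integers and C_k > 0 a real. Let the higher-priority tasks i = 1,…,k−1 have periods T_i > 0, execution times C_i ≥ 0, and utilizations U_i = C_i/T_i, indexed in non-increasing order of periods, i.e., T_1 ≥ T_2 ≥ ⋯ ≥ T_{k−1}, and assume Σ_{i=1}^{k−1} U_i < 1. Let B = ( h·C_k + Σ_{i=1}^{k−1} C_i − Σ_{i=1}^{k−1} U_i·(Σ_{ℓ=i}^{k−1} C_ℓ) ) / ( 1 − Σ_{i=1}^{k−1} U_i ). Then there exists a real t with 0 < t ≤ B such that h·C_k + Σ_{i=1}^{k−1} ⌈t/T_i⌉·C_i ≤ t. -/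

import Mathlib

/-!
Let `W t = h·C_k + ∑ ⌈t/T_i⌉·C_i` and let `R` be the least `t` with `W t ≤ t`; as `W` is monotone,
`W R = R` and `s < W s` for `s < R`. Let `θ_i = (⌈R/T_i⌉ - 1)·T_i` be the last release of task `i`
before `R`. Then `R = W R = h·C_k + ∑ (U_i·θ_i + C_i)`. The job of task `ℓ` released at `θ_ℓ` is
counted by `W R` but not by `W θ_i` when `θ_i ≤ θ_ℓ`, so `W R - W θ_i ≥ σ_i := ∑_{θ_i ≤ θ_ℓ} C_ℓ`,
and with `θ_i < W θ_i` this gives `θ_i ≤ R - σ_i`. Hence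
`R·(1 - ∑ U_i) ≤ h·C_k + ∑ C_i - ∑ U_i·σ_i`, and an exchange argument on pairs shows that
`∑ U_i·σ_i` is smallest when the `θ_i` are ordered like the indices, i.e. by non-increasing period,
which is the bound `B`.
-/

open Finset

theorem Monotone.map_csInf_setOf_map_le_eq {α : Type*} [ConditionallyCompleteLinearOrder α]
    {f : α → α} (hf : Monotone f) (hne : {x | f x ≤ x}.Nonempty)
    (hbdd : BddBelow {x | f x ≤ x}) :
    f (sInf {x | f x ≤ x}) = sInf {x | f x ≤ x} := by
  set S := {x | f x ≤ x}
  have hle : f (sInf S) ≤ sInf S := by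
    by_contra! hlt
    obtain ⟨x, hxS, hx⟩ := exists_lt_of_csInf_lt hne hlt
    exact absurd (hf (csInf_le hbdd hxS)) (not_le.mpr (hxS.trans_lt hx))
  exact le_antisymm hle (csInf_le hbdd (hf hle))

theorem Finset.sum_sum_le_sum_sum_of_add_swap_le {ι M : Type*}
    [AddCommMonoid M] [LinearOrder M] [IsOrderedCancelAddMonoid M] (I : Finset ι) (E D : ι → ι → M)
    (h : ∀ a ∈ I, ∀ b ∈ I, E a b + E b a ≤ D a b + D b a) :
    ∑ a ∈ I, ∑ b ∈ I, E a b ≤ ∑ a ∈ I, ∑ b ∈ I, D a b := by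
  have h2 : ∑ a ∈ I, ∑ b ∈ I, (E a b + E b a) ≤ ∑ a ∈ I, ∑ b ∈ I, (D a b + D b a) :=
    sum_le_sum fun a ha => sum_le_sum fun b hb => h a ha b hb
  simp only [sum_add_distrib] at h2
  rw [sum_comm (f := fun a b => E b a), sum_comm (f := fun a b => D b a)] at h2
  by_contra! hlt
  exact h2.not_gt (add_lt_add hlt hlt)

/-- Ordering the `θ`'s like the indices is the worst case, by an exchange argument on pairs. -/
theorem Finset.sum_mul_sum_filter_le_le_sum_mul_sum_filter_comp_le {ι β : Type*}
    [LinearOrder ι] [LinearOrder β] (I : Finset ι) (u c : ι → ℝ) (θ : ι → β)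
    (hu : ∀ i ∈ I, 0 ≤ u i) (hc : ∀ i ∈ I, 0 ≤ c i)
    (hexch : ∀ a ∈ I, ∀ b ∈ I, a ≤ b → u a * c b ≤ u b * c a) :
    ∑ i ∈ I, u i * ∑ ℓ ∈ I with i ≤ ℓ, c ℓ ≤ ∑ i ∈ I, u i * ∑ ℓ ∈ I with θ i ≤ θ ℓ, c ℓ := by
  simp only [sum_filter, mul_sum, mul_ite, mul_zero]
  refine sum_sum_le_sum_sum_of_add_swap_le I _ _ fun a ha b hb => ?_
  wlog hab : a ≤ b generalizing a b
  · simpa only [add_comm] using this b hb a ha (le_of_not_ge hab)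
  rcases hab.eq_or_lt with rfl | hlt
  · simp
  have hab' := mul_nonneg (hu a ha) (hc b hb)
  have hba' := mul_nonneg (hu b hb) (hc a ha)
  have := hexch a ha b hb hab
  rw [if_pos hab, if_neg hlt.not_ge, add_zero]
  rcases le_total (θ a) (θ b) with hθ | hθ <;> split_ifs <;> linarith

/-- The release time of the last job before `t` of a task released at the multiples of `T`. -/
noncomputable def lastRelease (T t : ℝ) : ℝ := (⌈t / T⌉ - 1) * T

theorem lastRelease_lt {T : ℝ} (hT : 0 < T) (t : ℝ) : lastRelease T t < t := by
  have h := Int.ceil_lt_add_one (t / T)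
  calc lastRelease T t < t / T * T := by unfold lastRelease; gcongr; linarith
    _ = t := div_mul_cancel₀ t hT.ne'

theorem ceil_div_le_ceil_sub_one_of_le_lastRelease {T s t : ℝ} (hT : 0 < T)
    (hs : s ≤ lastRelease T t) : (⌈s / T⌉ : ℝ) ≤ ⌈t / T⌉ - 1 := by
  have : ⌈s / T⌉ ≤ ⌈t / T⌉ - 1 := by
    rw [Int.ceil_le, div_le_iff₀ hT]
    push_cast
    exact hs
  exact_mod_cast this

theorem ceil_div_mul_eq_div_mul_lastRelease_add {T : ℝ} (hT : T ≠ 0) (t C : ℝ) :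
    ⌈t / T⌉ * C = C / T * lastRelease T t + C := by
  unfold lastRelease
  field_simp
  ring

section Workload

variable {ι : Type*} (a : ℝ) (T C : ι → ℝ) (I : Finset ι)

noncomputable def workload (t : ℝ) : ℝ := a + ∑ i ∈ I, ⌈t / T i⌉ * C i

variable {a T C I}

theorem workload_mono (hT : ∀ i ∈ I, 0 < T i) (hC : ∀ i ∈ I, 0 ≤ C i) :
    Monotone (workload a T C I) := fun s t hst =>
  add_le_add_right (sum_le_sum fun i hi => mul_le_mul_of_nonneg_right
    (by exact_mod_cast Int.ceil_mono (div_le_div_of_nonneg_right hst (hT i hi).le)) (hC i hi)) a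

variable {U : ι → ℝ}

theorem add_sum_mul_le_workload (hC : ∀ i ∈ I, 0 ≤ C i)
    (hU : ∀ i ∈ I, U i = C i / T i) (t : ℝ) :
    a + (∑ i ∈ I, U i) * t ≤ workload a T C I t := by
  rw [workload, sum_mul]
  refine add_le_add_right (sum_le_sum fun i hi => ?_) a
  calc U i * t = t / T i * C i := by rw [hU i hi]; ring
    _ ≤ ⌈t / T i⌉ * C i := mul_le_mul_of_nonneg_right (Int.le_ceil _) (hC i hi)

theorem workload_le_add_sum_mul_add (hC : ∀ i ∈ I, 0 ≤ C i)
    (hU : ∀ i ∈ I, U i = C i / T i) (t : ℝ) :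
    workload a T C I t ≤ a + (∑ i ∈ I, U i) * t + ∑ i ∈ I, C i := by
  rw [workload, sum_mul, add_assoc, ← sum_add_distrib]
  refine add_le_add_right (sum_le_sum fun i hi => ?_) a
  calc ⌈t / T i⌉ * C i ≤ (t / T i + 1) * C i :=
        mul_le_mul_of_nonneg_right (Int.ceil_lt_add_one _).le (hC i hi)
    _ = U i * t + C i := by rw [hU i hi]; ring

theorem workload_eq_sum_lastRelease (hT : ∀ i ∈ I, 0 < T i) (hU : ∀ i ∈ I, U i = C i / T i)
    (t : ℝ) : workload a T C I t = a + ∑ i ∈ I, (U i * lastRelease (T i) t + C i) := by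
  unfold workload
  congr 1
  refine sum_congr rfl fun i hi => ?_
  rw [hU i hi, ceil_div_mul_eq_div_mul_lastRelease_add (hT i hi).ne']

theorem sum_filter_le_lastRelease_le_workload_sub (hT : ∀ i ∈ I, 0 < T i)
    (hC : ∀ i ∈ I, 0 ≤ C i) {s t : ℝ} (hst : s ≤ t) :
    ∑ ℓ ∈ I with s ≤ lastRelease (T ℓ) t, C ℓ ≤ workload a T C I t - workload a T C I s := by
  rw [workload, workload, add_sub_add_left_eq_sub, ← sum_sub_distrib, sum_filter]
  gcongr with ℓ hℓ
  have hTℓ := hT ℓ hℓ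
  split_ifs with hs
  · have := ceil_div_le_ceil_sub_one_of_le_lastRelease hTℓ hs
    nlinarith [hC ℓ hℓ]
  · have : (⌈s / T ℓ⌉ : ℝ) ≤ ⌈t / T ℓ⌉ := by
      exact_mod_cast Int.ceil_mono (div_le_div_of_nonneg_right hst hTℓ.le)
    nlinarith [hC ℓ hℓ]

theorem pos_of_workload_le_self (ha : 0 < a) (hC : ∀ i ∈ I, 0 ≤ C i)
    (hU : ∀ i ∈ I, U i = C i / T i) (hsum : ∑ i ∈ I, U i < 1) {t : ℝ}
    (ht : workload a T C I t ≤ t) : 0 < t := by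
  have := add_sum_mul_le_workload (a := a) hC hU t
  nlinarith

theorem exists_workload_le_self (hC : ∀ i ∈ I, 0 ≤ C i) (hU : ∀ i ∈ I, U i = C i / T i)
    (hsum : ∑ i ∈ I, U i < 1) : ∃ t, workload a T C I t ≤ t := by
  refine ⟨(a + ∑ i ∈ I, C i) / (1 - ∑ i ∈ I, U i), ?_⟩
  have hgap : 0 < 1 - ∑ i ∈ I, U i := sub_pos.mpr hsum
  have := workload_le_add_sum_mul_add (a := a) hC hU ((a + ∑ i ∈ I, C i) / (1 - ∑ i ∈ I, U i))
  have hmul := div_mul_cancel₀ (a + ∑ i ∈ I, C i) hgap.ne'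
  nlinarith

theorem mul_one_sub_sum_le_of_least_fixedPoint [LinearOrder ι] (hT : ∀ i ∈ I, 0 < T i)
    (hC : ∀ i ∈ I, 0 ≤ C i) (hU : ∀ i ∈ I, U i = C i / T i)
    (hsort : ∀ i ∈ I, ∀ j ∈ I, i ≤ j → T j ≤ T i) {R : ℝ}
    (hfix : workload a T C I R = R) (hmin : ∀ s < R, s < workload a T C I s) :
    R * (1 - ∑ i ∈ I, U i) ≤
      a + ∑ i ∈ I, C i - ∑ i ∈ I, U i * ∑ ℓ ∈ I with i ≤ ℓ, C ℓ := by
  set θ : ι → ℝ := fun i => lastRelease (T i) R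
  have hθ : ∀ i ∈ I, θ i ≤ R - ∑ ℓ ∈ I with θ i ≤ θ ℓ, C ℓ := fun i hi => by
    have hlt := lastRelease_lt (hT i hi) R
    have := sum_filter_le_lastRelease_le_workload_sub (a := a) hT hC hlt.le
    linarith [hmin _ hlt]
  have hUnn : ∀ i ∈ I, 0 ≤ U i := fun i hi => hU i hi ▸ div_nonneg (hC i hi) (hT i hi).le
  have hexch : ∀ i ∈ I, ∀ j ∈ I, i ≤ j → U i * C j ≤ U j * C i := fun i hi j hj hij => by
    rw [hU i hi, hU j hj, div_mul_eq_mul_div, div_mul_eq_mul_div, mul_comm (C j)]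
    exact div_le_div_of_nonneg_left (mul_nonneg (hC i hi) (hC j hj)) (hT j hj) (hsort i hi j hj hij)
  have hswap := sum_mul_sum_filter_le_le_sum_mul_sum_filter_comp_le I U C θ hUnn hC hexch
  have hR : R ≤ a + (∑ i ∈ I, U i) * R - ∑ i ∈ I, U i * ∑ ℓ ∈ I with θ i ≤ θ ℓ, C ℓ
      + ∑ i ∈ I, C i :=
    calc R = a + ∑ i ∈ I, (U i * θ i + C i) := by
          rw [← workload_eq_sum_lastRelease hT hU, hfix]
      _ ≤ a + ∑ i ∈ I, (U i * (R - ∑ ℓ ∈ I with θ i ≤ θ ℓ, C ℓ) + C i) := by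
          gcongr with i hi
          exacts [hUnn i hi, hθ i hi]
      _ = _ := by simp only [mul_sub, sum_add_distrib, sum_sub_distrib, sum_mul]; ring
  linarith

end Workload

theorem uniprocessor_quadratic_response_time_general (k h : ℕ) (hh : 1 ≤ h)
    (Ck : ℝ) (hCk : 0 < Ck)
    (T C U : ℕ → ℝ)
    (hT : ∀ i ∈ Finset.Icc 1 (k - 1), 0 < T i)
    (hC : ∀ i ∈ Finset.Icc 1 (k - 1), 0 ≤ C i)
    (hU : ∀ i ∈ Finset.Icc 1 (k - 1), U i = C i / T i)
    (hsort : ∀ i j : ℕ, 1 ≤ i → i ≤ j → j ≤ k - 1 → T j ≤ T i)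
    (hsum : ∑ i ∈ Finset.Icc 1 (k - 1), U i < 1)
    (B : ℝ)
    (hB : B = ((h : ℝ) * Ck + (∑ i ∈ Finset.Icc 1 (k - 1), C i)
      - ∑ i ∈ Finset.Icc 1 (k - 1), U i * ∑ ℓ ∈ Finset.Icc i (k - 1), C ℓ)
      / (1 - ∑ i ∈ Finset.Icc 1 (k - 1), U i)) :
    ∃ t : ℝ, 0 < t ∧ t ≤ B ∧
      (h : ℝ) * Ck + (∑ i ∈ Finset.Icc 1 (k - 1), (⌈t / T i⌉ : ℝ) * C i) ≤ t := by
  set I := Icc 1 (k - 1)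
  set S := {t | workload (h * Ck) T C I t ≤ t}
  have ha : 0 < (h : ℝ) * Ck := mul_pos (Nat.cast_pos.mpr hh) hCk
  have hpos : ∀ t ∈ S, 0 < t := fun t ht => pos_of_workload_le_self ha hC hU hsum ht
  have hbdd : BddBelow S := ⟨0, fun t ht => (hpos t ht).le⟩
  have hfix := (workload_mono hT hC).map_csInf_setOf_map_le_eq
    (exists_workload_le_self hC hU hsum) hbdd
  have hmin : ∀ s < sInf S, s < workload (h * Ck) T C I s :=
    fun s hs => lt_of_not_ge fun hs' => hs.not_ge (csInf_le hbdd hs')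
  have hsort' : ∀ i ∈ I, ∀ j ∈ I, i ≤ j → T j ≤ T i := fun i hi j hj hij =>
    hsort i j (mem_Icc.mp hi).1 hij (mem_Icc.mp hj).2
  have hbound := mul_one_sub_sum_le_of_least_fixedPoint hT hC hU hsort' hfix hmin
  have htail : ∀ i ∈ I, ∑ ℓ ∈ I with i ≤ ℓ, C ℓ = ∑ ℓ ∈ Icc i (k - 1), C ℓ := fun i hi => by
    congr 1; ext ℓ; simp only [I, mem_filter, mem_Icc] at hi ⊢; omega
  refine ⟨sInf S, hpos _ hfix.le, ?_, hfix.le⟩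
  rw [hB, le_div_iff₀ (sub_pos.mpr hsum),
    ← sum_congr rfl fun i hi => congrArg (U i * ·) (htail i hi)]
  exact hbound

/-- Lemma 12 / Theorem 5: quadratic response-time bound for the h-th job in
the level-k busy window under uniprocessor fixed-priority scheduling. -/
theorem uniprocessor_quadratic_response_time (k h : ℕ) (hk : 2 ≤ k) (hh : 1 ≤ h)
    (Ck : ℝ) (hCk : 0 < Ck)
    (T C U : ℕ → ℝ)
    (hT : ∀ i ∈ Finset.Icc 1 (k - 1), 0 < T i)
    (hC : ∀ i ∈ Finset.Icc 1 (k - 1), 0 ≤ C i)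
    (hU : ∀ i ∈ Finset.Icc 1 (k - 1), U i = C i / T i)
    (hsort : ∀ i j : ℕ, 1 ≤ i → i ≤ j → j ≤ k - 1 → T j ≤ T i)
    (hsum : ∑ i ∈ Finset.Icc 1 (k - 1), U i < 1)
    (B : ℝ)
    (hB : B = ((h : ℝ) * Ck + (∑ i ∈ Finset.Icc 1 (k - 1), C i)
      - ∑ i ∈ Finset.Icc 1 (k - 1), U i * ∑ ℓ ∈ Finset.Icc i (k - 1), C ℓ)
      / (1 - ∑ i ∈ Finset.Icc 1 (k - 1), U i)) :
    ∃ t : ℝ, 0 < t ∧ t ≤ B ∧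
      (h : ℝ) * Ck + (∑ i ∈ Finset.Icc 1 (k - 1), (⌈t / T i⌉ : ℝ) * C i) ≤ t :=
  uniprocessor_quadratic_response_time_general k h hh Ck hCk T C U hT hC hU hsort hsum B hB
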